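/- arXiv:2501.03099 — 2 statements merged into one kernel-verified Lean document; each statement's English description precedes it below -/
import Mathlib

section
/- Define Δ(c) = |K^E(c)| − |L^E(c)| where K^E(c) (resp. L^E(c)) is the set of tuples in E(c) of even (resp. odd) length. Then Δ satisfies Δ(c) = Δ(c−2) − Δ(c−3) − Δ(c−4) for all c ≥ 8, with Δ(4)=−2, Δ(5)=0, Δ(6)=−2, Δ(7)=2. -/
/-!
Write `Δ c = ∑_{l ∈ E(c)} (-1)^{length l}` and sort the tuples of `E(c)`, `c ≥ 5`, by their
first entry `e₁`. If `|e₁| ≥ 6`, moving `e₁` two steps towards zero gives a tuple of `E(c - 2)`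
of the same length. If `|e₁| = 4`, then `k ≥ 2`, and deleting `e₁` gives a tuple of `E(c - 3)`
or `E(c - 4)` according as `e₁` and `e₂` have equal or opposite signs, of length one less. Each
of these maps is a bijection, so `Δ c = Δ (c - 2) - Δ (c - 3) - Δ (c - 4)`. The initial values
follow from `E(c) = ∅` for `c < 4` and `E(4) = {(4), (-4)}`.
-/

/-- `Eset c` is the set of nonempty tuples of even integers `e_i` with `|e_i| ≥ 4`
and `c = Σ|e_i| − #{i : sign e_i = sign e_{i+1}}`. -/
def Eset (c : ℕ) : Set (List ℤ) :=
  {l | l ≠ [] ∧ (∀ e ∈ l, Even e ∧ 4 ≤ |e|) ∧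
    (c : ℤ) = (l.map (fun e => |e|)).sum
      - ((l.zip l.tail).filter (fun p => p.1.sign == p.2.sign)).length}

/-- Tuples in `Eset c` of even length (knots). -/
def KEset (c : ℕ) : Set (List ℤ) := {l | l ∈ Eset c ∧ Even l.length}

/-- Tuples in `Eset c` of odd length (2-component links). -/
def LEset (c : ℕ) : Set (List ℤ) := {l | l ∈ Eset c ∧ Odd l.length}

noncomputable def Δ (c : ℕ) : ℤ := (Nat.card (KEset c) : ℤ) - Nat.card (LEset c)

open Set

lemma Int.sign_add_two_mul_sign (e : ℤ) : (e + 2 * e.sign).sign = e.sign := by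
  rcases lt_trichotomy e 0 with h | rfl | h
  · rw [Int.sign_eq_neg_one_of_neg h, Int.sign_eq_neg_one_of_neg (by linarith)]
  · rfl
  · rw [Int.sign_eq_one_of_pos h, Int.sign_eq_one_of_pos (by linarith)]

lemma Int.abs_add_two_mul_sign {e : ℤ} (he : e ≠ 0) : |e + 2 * e.sign| = |e| + 2 := by
  rcases he.lt_or_gt with h | h
  · rw [Int.sign_eq_neg_one_of_neg h, abs_of_neg h, abs_of_neg (by linarith)]
    ring
  · rw [Int.sign_eq_one_of_pos h, abs_of_pos h, abs_of_pos (by linarith)]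
    ring

lemma Int.sign_sub_two_mul_sign {e : ℤ} (he : 3 ≤ |e|) : (e - 2 * e.sign).sign = e.sign := by
  rcases lt_trichotomy e 0 with h | rfl | h
  · rw [abs_of_neg h] at he
    rw [Int.sign_eq_neg_one_of_neg h, Int.sign_eq_neg_one_of_neg (by linarith)]
  · rfl
  · rw [abs_of_pos h] at he
    rw [Int.sign_eq_one_of_pos h, Int.sign_eq_one_of_pos (by linarith)]

lemma Int.sign_eq_one_or_neg_one_of_ne_zero {a : ℤ} (ha : a ≠ 0) : a.sign = 1 ∨ a.sign = -1 :=
  (abs_eq zero_le_one).1 (Int.abs_sign_of_ne_zero ha)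

lemma List.finite_length_le_forall_mem {α : Type*} {s : Set α} (hs : s.Finite) (n : ℕ) :
    {l : List α | l.length ≤ n ∧ ∀ x ∈ l, x ∈ s}.Finite := by
  have := hs.to_subtype
  refine ((List.finite_length_le s n).image (List.map (↑))).subset ?_
  rintro l ⟨hn, hl⟩
  lift l to List s using hl
  exact ⟨l, by simpa using hn, rfl⟩

lemma finsum_mem_eq_mul_ncard {α M : Type*} [NonAssocSemiring M] {s : Set α} (hs : s.Finite)
    {f : α → M} {σ : M} (hf : ∀ x ∈ s, f x = σ) : ∑ᶠ x ∈ s, f x = σ * s.ncard := by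
  rw [finsum_mem_congr rfl hf, finsum_mem_eq_finite_toFinset_sum _ hs, Finset.sum_const,
    Set.ncard_eq_toFinset_card _ hs, nsmul_eq_mul']

def weight (l : List ℤ) : ℤ :=
  (l.map (fun e => |e|)).sum
    - ((l.zip l.tail).filter (fun p => p.1.sign == p.2.sign)).length

lemma mem_Eset {c : ℕ} {l : List ℤ} :
    l ∈ Eset c ↔ l ≠ [] ∧ (∀ e ∈ l, Even e ∧ 4 ≤ |e|) ∧ (c : ℤ) = weight l :=
  Iff.rfl

lemma weight_singleton (e : ℤ) : weight [e] = |e| := by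
  simp [weight]

lemma weight_cons_cons (e a : ℤ) (t : List ℤ) :
    weight (e :: a :: t) = |e| + weight (a :: t) - if e.sign = a.sign then 1 else 0 := by
  by_cases h : e.sign = a.sign <;> simp [weight, h] <;> ring

lemma weight_cons_ge (e : ℤ) {t : List ℤ} (ht : t ≠ []) :
    |e| - 1 + weight t ≤ weight (e :: t) := by
  obtain ⟨a, r, rfl⟩ := List.exists_cons_of_ne_nil ht
  rw [weight_cons_cons]
  split_ifs <;> linarith

lemma le_weight_of_four_le_abs {l : List ℤ} (hl : l ≠ []) (h4 : ∀ e ∈ l, 4 ≤ |e|) :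
    3 * l.length + 1 ≤ weight l ∧ ∀ e ∈ l, |e| ≤ weight l := by
  induction l with
  | nil => exact absurd rfl hl
  | cons e t ih =>
    rw [List.forall_mem_cons] at h4
    rcases eq_or_ne t [] with rfl | ht
    · simp [weight_singleton, h4.1]
    obtain ⟨hlen, habs⟩ := ih ht h4.2
    have hcons := weight_cons_ge e ht
    refine ⟨by push_cast [List.length_cons]; linarith,
      List.forall_mem_cons.2 ⟨by linarith, fun x hx => by linarith [habs x hx]⟩⟩

lemma Eset_finite (c : ℕ) : (Eset c).Finite := by
  refine (List.finite_length_le_forall_mem (finite_Icc (-(c : ℤ)) c) c).subset ?_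
  intro l hl
  obtain ⟨hl, hent, hc⟩ := mem_Eset.1 hl
  obtain ⟨hlen, habs⟩ := le_weight_of_four_le_abs hl fun e he => (hent e he).2
  exact ⟨by omega, fun e he => abs_le.1 (hc ▸ habs e he)⟩

lemma Eset_eq_empty_of_lt_four {c : ℕ} (hc : c < 4) : Eset c = ∅ := by
  refine eq_empty_of_forall_notMem fun l hl => ?_
  obtain ⟨hl, hent, hw⟩ := mem_Eset.1 hl
  have := (le_weight_of_four_le_abs hl fun e he => (hent e he).2).1
  have := List.length_pos_iff.2 hl
  omega

lemma Eset_four : Eset 4 = {[4], [-4]} := by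
  ext l
  constructor
  · intro hl
    obtain ⟨hl, hent, hw⟩ := mem_Eset.1 hl
    have hlen := (le_weight_of_four_le_abs hl fun e he => (hent e he).2).1
    have hpos := List.length_pos_iff.2 hl
    have hlen1 : l.length = 1 := by omega
    obtain ⟨e, rfl⟩ := List.length_eq_one_iff.1 hlen1
    rw [weight_singleton] at hw
    rcases (abs_eq (by norm_num)).1 hw.symm with rfl | rfl <;> simp
  · rintro (rfl | rfl) <;>
      exact mem_Eset.2 ⟨List.cons_ne_nil _ _, by decide, by simp [weight_singleton]⟩

lemma Δ_eq_finsum (c : ℕ) : Δ c = ∑ᶠ l ∈ Eset c, (-1 : ℤ) ^ l.length := by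
  have hunion : Eset c = KEset c ∪ LEset c := by
    ext l
    simp only [KEset, LEset, mem_union, mem_ofPred_eq, ← and_or_left, Nat.even_or_odd, and_true]
  have hdisj : Disjoint (KEset c) (LEset c) :=
    disjoint_left.2 fun _ hK hL => Nat.not_even_iff_odd.2 hL.2 hK.2
  have hfin := Eset_finite c
  rw [hunion] at hfin ⊢
  have hK := hfin.subset subset_union_left
  have hL := hfin.subset subset_union_right
  rw [finsum_mem_union hdisj hK hL, finsum_mem_eq_mul_ncard hK fun l hl => hl.2.neg_one_pow,
    finsum_mem_eq_mul_ncard hL fun l hl => hl.2.neg_one_pow, Δ, Nat.card_coe_set_eq,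
    Nat.card_coe_set_eq]
  ring

lemma Δ_eq_zero_of_lt_four {c : ℕ} (hc : c < 4) : Δ c = 0 := by
  simp [Δ_eq_finsum, Eset_eq_empty_of_lt_four hc]

lemma Δ_four : Δ 4 = -2 := by
  rw [Δ_eq_finsum, Eset_four, finsum_mem_pair (by decide)]
  norm_num

lemma ne_zero_of_mem_Eset {c : ℕ} {l : List ℤ} (hl : l ∈ Eset c) {e : ℤ} (he : e ∈ l) :
    e ≠ 0 := by
  rintro rfl
  simpa using (hl.2.1 0 he).2

def growHead : List ℤ → List ℤ
  | [] => []
  | e :: t => (e + 2 * e.sign) :: t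

lemma length_growHead (l : List ℤ) : (growHead l).length = l.length := by
  cases l <;> rfl

lemma growHead_injective : Function.Injective growHead := by
  rintro (_ | ⟨e, t⟩) (_ | ⟨e', t'⟩) h <;>
    simp only [growHead, List.cons.injEq, reduceCtorEq] at h
  · rfl
  obtain ⟨he, rfl⟩ := h
  have hs := congrArg Int.sign he
  rw [Int.sign_add_two_mul_sign, Int.sign_add_two_mul_sign] at hs
  rw [hs] at he
  rw [add_right_cancel he]

lemma weight_growHead {e : ℤ} (he : e ≠ 0) (t : List ℤ) :
    weight (growHead (e :: t)) = weight (e :: t) + 2 := by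
  rcases t with _ | ⟨a, r⟩
  · simp [growHead, weight_singleton, Int.abs_add_two_mul_sign he]
  · simp only [growHead, weight_cons_cons, Int.sign_add_two_mul_sign, Int.abs_add_two_mul_sign he]
    ring

lemma growHead_mem_Eset {c : ℕ} {l : List ℤ} (hl : l ∈ Eset c) :
    growHead l ∈ Eset (c + 2) := by
  obtain ⟨e, t, rfl⟩ := List.exists_cons_of_ne_nil hl.1
  have he := ne_zero_of_mem_Eset hl List.mem_cons_self
  obtain ⟨-, hent, hw⟩ := mem_Eset.1 hl
  rw [List.forall_mem_cons] at hent
  refine mem_Eset.2 ⟨List.cons_ne_nil _ _, List.forall_mem_cons.2 ⟨⟨?_, ?_⟩, hent.2⟩, ?_⟩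
  · exact hent.1.1.add (even_two_mul _)
  · rw [Int.abs_add_two_mul_sign he]
    linarith [hent.1.2]
  · rw [weight_growHead he, ← hw]
    push_cast
    ring

lemma six_le_abs_headI_growHead {c : ℕ} {l : List ℤ} (hl : l ∈ Eset c) :
    6 ≤ |(growHead l).headI| := by
  obtain ⟨e, t, rfl⟩ := List.exists_cons_of_ne_nil hl.1
  rw [growHead, List.headI_cons,
    Int.abs_add_two_mul_sign (ne_zero_of_mem_Eset hl List.mem_cons_self)]
  linarith [(hl.2.1 e List.mem_cons_self).2]

lemma mem_growHead_image {c : ℕ} {e : ℤ} {t : List ℤ} (hl : e :: t ∈ Eset (c + 2))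
    (he : 6 ≤ |e|) : e :: t ∈ growHead '' Eset c := by
  obtain ⟨-, hent, hw⟩ := mem_Eset.1 hl
  rw [List.forall_mem_cons] at hent
  have hsign : (e - 2 * e.sign).sign = e.sign := Int.sign_sub_two_mul_sign (by linarith)
  have hne : e - 2 * e.sign ≠ 0 := by
    intro h
    rw [h, Int.sign_zero, eq_comm, Int.sign_eq_zero_iff_zero] at hsign
    simp [hsign] at he
  have hgrow : growHead ((e - 2 * e.sign) :: t) = e :: t := by
    rw [growHead, hsign, sub_add_cancel]
  have habs := Int.abs_add_two_mul_sign hne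
  rw [hsign, sub_add_cancel] at habs
  refine ⟨(e - 2 * e.sign) :: t, mem_Eset.2 ⟨List.cons_ne_nil _ _,
    List.forall_mem_cons.2 ⟨⟨?_, by linarith⟩, hent.2⟩, ?_⟩, hgrow⟩
  · exact hent.1.1.sub (even_two_mul _)
  · have := weight_growHead hne t
    rw [hgrow, ← hw] at this
    push_cast at this
    linarith

def consFour (s : ℤ) (l : List ℤ) : List ℤ := (4 * s * l.headI.sign) :: l

lemma consFour_injective (s : ℤ) : Function.Injective (consFour s) :=
  fun _ _ h => (List.cons.inj h).2

lemma abs_headI_consFour_le {s : ℤ} (hs : s = 1 ∨ s = -1) (l : List ℤ) :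
    |(consFour s l).headI| ≤ 4 := by
  rcases Int.sign_trichotomy l.headI with h | h | h <;>
    rcases hs with rfl | rfl <;> simp [consFour, h]

lemma weight_consFour {s : ℤ} (hs : s = 1 ∨ s = -1) {a : ℤ} (ha : a ≠ 0) (r : List ℤ) :
    weight (consFour s (a :: r)) = weight (a :: r) + if s = 1 then 3 else 4 := by
  rcases Int.sign_eq_one_or_neg_one_of_ne_zero ha with h | h <;> rcases hs with rfl | rfl <;>
    simp [consFour, weight_cons_cons, h, show Int.sign 4 = 1 from rfl] <;> ring

lemma consFour_mem_Eset {s : ℤ} (hs : s = 1 ∨ s = -1) {c : ℕ} {l : List ℤ}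
    (hl : l ∈ Eset c) :
    consFour s l ∈ Eset (c + if s = 1 then 3 else 4) := by
  obtain ⟨a, r, rfl⟩ := List.exists_cons_of_ne_nil hl.1
  have ha := ne_zero_of_mem_Eset hl List.mem_cons_self
  obtain ⟨-, hent, hw⟩ := mem_Eset.1 hl
  refine mem_Eset.2
    ⟨List.cons_ne_nil _ _, List.forall_mem_cons.2 ⟨⟨⟨2 * s * a.sign, ?_⟩, ?_⟩, hent⟩, ?_⟩
  · simp only [List.headI_cons]
    ring
  · rcases hs with rfl | rfl <;> simp [abs_mul, Int.abs_sign_of_ne_zero ha]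
  · rw [weight_consFour hs ha, ← hw]
    split_ifs <;> push_cast <;> ring

lemma cons_eq_consFour {e a : ℤ} (he : |e| = 4) (ha : a ≠ 0) (r : List ℤ) :
    e :: a :: r = consFour (e.sign * a.sign) (a :: r) := by
  have hsign_e : e = 4 * e.sign := by
    have := Int.sign_mul_abs e
    rw [he] at this
    linarith
  rcases Int.sign_eq_one_or_neg_one_of_ne_zero ha with h | h <;> simp [consFour, h, ← hsign_e]

lemma mem_consFour_image {n : ℕ} (hn : n ≠ 0) {e : ℤ} {t : List ℤ}
    (hl : e :: t ∈ Eset (n + 4)) (he : |e| = 4) :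
    e :: t ∈ consFour 1 '' Eset (n + 1) ∪ consFour (-1) '' Eset n := by
  obtain ⟨a, r, rfl⟩ : ∃ a r, t = a :: r := by
    rcases t with _ | ⟨a, r⟩
    · rw [mem_Eset, weight_singleton, he] at hl
      omega
    · exact ⟨a, r, rfl⟩
  have ha := ne_zero_of_mem_Eset hl (List.mem_cons_of_mem _ List.mem_cons_self)
  have he0 := ne_zero_of_mem_Eset hl List.mem_cons_self
  obtain ⟨-, hent, hw⟩ := mem_Eset.1 hl
  have hs : e.sign * a.sign = 1 ∨ e.sign * a.sign = -1 := by
    rw [← Int.sign_mul]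
    exact Int.sign_eq_one_or_neg_one_of_ne_zero (mul_ne_zero he0 ha)
  have hcons := (cons_eq_consFour he ha r).symm
  have hweight := weight_consFour hs ha r
  rw [hcons, ← hw] at hweight
  push_cast at hweight
  have hmem {k : ℕ} (hk : weight (a :: r) = n + k) : a :: r ∈ Eset (n + k) :=
    mem_Eset.2 ⟨List.cons_ne_nil _ _, (List.forall_mem_cons.1 hent).2, by push_cast; linarith⟩
  rcases hs with hs | hs
  · rw [if_pos hs] at hweight
    exact Or.inl ⟨a :: r, hmem (by push_cast; linarith), hs ▸ hcons⟩
  · rw [if_neg (by rw [hs]; decide)] at hweight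
    exact Or.inr ⟨a :: r, hmem (k := 0) (by push_cast; linarith), hs ▸ hcons⟩

lemma Eset_add_four {n : ℕ} (hn : n ≠ 0) :
    Eset (n + 4) =
      growHead '' Eset (n + 2) ∪ (consFour 1 '' Eset (n + 1) ∪ consFour (-1) '' Eset n) := by
  refine Subset.antisymm ?_ (union_subset ?_ (union_subset ?_ ?_))
  · rintro (_ | ⟨e, t⟩) hl
    · exact absurd rfl hl.1
    obtain ⟨heven, he4⟩ := hl.2.1 e List.mem_cons_self
    obtain h6 | h4 : 6 ≤ |e| ∨ |e| = 4 := by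
      obtain ⟨k, hk⟩ := even_abs.2 heven
      omega
    · exact Or.inl (mem_growHead_image hl h6)
    · exact Or.inr (mem_consFour_image hn hl h4)
  · rintro _ ⟨l, hl, rfl⟩
    exact growHead_mem_Eset hl
  · rintro _ ⟨l, hl, rfl⟩
    simpa using consFour_mem_Eset (Or.inl rfl) hl
  · rintro _ ⟨l, hl, rfl⟩
    simpa using consFour_mem_Eset (Or.inr rfl) hl

lemma consFour_one_ne_consFour_neg_one {l l' : List ℤ} (hl : l.headI ≠ 0) :
    consFour 1 l ≠ consFour (-1) l' := by
  intro h
  obtain ⟨hhead, rfl⟩ := List.cons.inj h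
  have : l.headI.sign = 0 := by linarith
  exact hl (Int.sign_eq_zero_iff_zero.1 this)

lemma Δ_add_four {n : ℕ} (hn : n ≠ 0) : Δ (n + 4) = Δ (n + 2) - Δ (n + 1) - Δ n := by
  have hfin (c : ℕ) (f : List ℤ → List ℤ) : (f '' Eset c).Finite := (Eset_finite c).image f
  have hdisj_grow : Disjoint (growHead '' Eset (n + 2))
      (consFour 1 '' Eset (n + 1) ∪ consFour (-1) '' Eset n) := by
    rw [disjoint_left]
    rintro _ ⟨l, hl, rfl⟩ hcons
    have h6 := six_le_abs_headI_growHead hl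
    rcases hcons with ⟨l', -, h⟩ | ⟨l', -, h⟩
    · linarith [h ▸ abs_headI_consFour_le (Or.inl rfl) l']
    · linarith [h ▸ abs_headI_consFour_le (Or.inr rfl) l']
  have hdisj_cons : Disjoint (consFour 1 '' Eset (n + 1)) (consFour (-1) '' Eset n) := by
    rw [disjoint_left]
    rintro _ ⟨l, hl, rfl⟩ ⟨l', -, h⟩
    obtain ⟨a, r, rfl⟩ := List.exists_cons_of_ne_nil hl.1
    exact consFour_one_ne_consFour_neg_one (ne_zero_of_mem_Eset hl List.mem_cons_self) h.symm
  simp only [Δ_eq_finsum]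
  rw [Eset_add_four hn, finsum_mem_union hdisj_grow (hfin _ _) ((hfin _ _).union (hfin _ _)),
    finsum_mem_union hdisj_cons (hfin _ _) (hfin _ _), finsum_mem_image growHead_injective.injOn,
    finsum_mem_image (consFour_injective 1).injOn, finsum_mem_image (consFour_injective (-1)).injOn]
  simp only [length_growHead, consFour, List.length_cons, pow_succ, mul_neg_one,
    finsum_mem_neg_distrib _ (Eset_finite _)]
  ring

theorem Δ_recursion :
    Δ 4 = -2 ∧ Δ 5 = 0 ∧ Δ 6 = -2 ∧ Δ 7 = 2 ∧
      ∀ c : ℕ, 8 ≤ c → Δ c = Δ (c - 2) - Δ (c - 3) - Δ (c - 4) := by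
  have h5 := Δ_add_four (n := 1) one_ne_zero
  have h6 := Δ_add_four (n := 2) two_ne_zero
  have h7 := Δ_add_four (n := 3) three_ne_zero
  norm_num [Δ_four, Δ_eq_zero_of_lt_four] at h5 h6 h7
  refine ⟨Δ_four, h5, h6, by rw [h7, h5]; rfl, fun c hc => ?_⟩
  obtain ⟨n, rfl⟩ : ∃ n, c = n + 4 := ⟨c - 4, by omega⟩
  simpa using Δ_add_four (by omega : n ≠ 0)
end

section
/- For c ≥ 7, the solution of the recursion A(c) = A(c−2) + 2·A(c−4) + 3·2^{(c−5)/2} (for odd c ≥ 11) with A(7)=14 and A(9)=34, and A(c)=0 for c even, is given for odd c by A(c) = ((1+3d)/3)·2^{d−1} − (2/3)·(−1)^d where d = (c−1)/2. -/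
theorem Nat.eq_of_twoStep_recurrence {α : Type*} (F : ℕ → α → α → α) {u v : ℕ → α}
    (hu : ∀ n, u (n + 2) = F n (u n) (u (n + 1)))
    (hv : ∀ n, v (n + 2) = F n (v n) (v (n + 1)))
    (h0 : u 0 = v 0) (h1 : u 1 = v 1) : u = v := by
  funext n
  induction n using Nat.twoStepInduction with
  | zero => exact h0
  | one => exact h1
  | more n ih₀ ih₁ => rw [hu, hv, ih₀, ih₁]

/-- The closed form, as a function of `d = (c - 1) / 2`. -/
def closedForm (d : ℕ) : ℚ :=
  ((1 + 3 * (d : ℚ)) / 3) * 2 ^ (d - 1) - (2 / 3) * (-1 : ℚ) ^ d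

/-- `2` is a characteristic root of `x² = x + 2`, so the forcing term `3·2ⁿ` is matched by the
resonant particular solution `d·2^(d-1)`; `2^(d-1)` and `(-1)^d` solve the homogeneous part. -/
theorem closedForm_add_three (n : ℕ) :
    closedForm (n + 3) = closedForm (n + 2) + 2 * closedForm (n + 1) + 3 * 2 ^ (n + 1) := by
  simp only [closedForm, Nat.add_sub_cancel, show n + 3 - 1 = n + 2 by omega,
    show n + 2 - 1 = n + 1 by omega]
  push_cast
  ring

theorem A_closed_form_general (A : ℕ → ℚ) (h7 : A 7 = 14) (h9 : A 9 = 34)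
    (hrec : ∀ c : ℕ, Odd c → 11 ≤ c →
      A c = A (c - 2) + 2 * A (c - 4) + 3 * 2 ^ ((c - 5) / 2)) :
    ∀ c : ℕ, Odd c → 7 ≤ c →
      A c = ((1 + 3 * (((c - 1) / 2 : ℕ) : ℚ)) / 3) * 2 ^ ((c - 1) / 2 - 1)
        - (2 / 3) * (-1 : ℚ) ^ ((c - 1) / 2) := by
  have hA : (fun n ↦ A (2 * n + 7)) = fun n ↦ closedForm (n + 3) := by
    refine Nat.eq_of_twoStep_recurrence (fun n x y ↦ y + 2 * x + 3 * 2 ^ (n + 3)) ?_ ?_ ?_ ?_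
    · intro n
      have h := hrec (2 * (n + 2) + 7) ⟨n + 5, by ring⟩ (by omega)
      rwa [show (2 * (n + 2) + 7 - 5) / 2 = n + 3 by omega] at h
    · intro n
      exact closedForm_add_three (n + 2)
    · norm_num [h7, closedForm]
    · norm_num [h9, closedForm]
  intro c ⟨k, hk⟩ hc
  obtain ⟨n, rfl⟩ : ∃ n, c = 2 * n + 7 := ⟨k - 3, by omega⟩
  rw [show (2 * n + 7 - 1) / 2 = n + 3 by omega]
  exact congrFun hA n

theorem A_closed_form (A : ℕ → ℚ) (h7 : A 7 = 14) (h9 : A 9 = 34)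
    (heven : ∀ c : ℕ, Even c → A c = 0)
    (hrec : ∀ c : ℕ, Odd c → 11 ≤ c →
      A c = A (c - 2) + 2 * A (c - 4) + 3 * 2 ^ ((c - 5) / 2)) :
    ∀ c : ℕ, Odd c → 7 ≤ c →
      A c = ((1 + 3 * (((c - 1) / 2 : ℕ) : ℚ)) / 3) * 2 ^ ((c - 1) / 2 - 1)
        - (2 / 3) * (-1 : ℚ) ^ ((c - 1) / 2) :=
  A_closed_form_general A h7 h9 hrec
end
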